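/- The probabilities of disagreement P(Y ≠ Ỹ) and P(Z ≠ Z̃) are both bounded above by (2/p²)(1 − p²)^(N/4). -/

import Mathlib

open MeasureTheory Filter

/-- The Bernoulli(p) measure on `Bool`: `true` has probability `p`. -/
noncomputable def bern (p : ℝ) : Measure Bool :=
  ENNReal.ofReal p • Measure.dirac true + ENNReal.ofReal (1 - p) • Measure.dirac false

/-- The law of a random subset of `{0, …, N}` where each element is included
independently with probability `p`, encoded by indicator functions. -/
noncomputable def prodBern (p : ℝ) (N : ℕ) : Measure (Fin (N + 1) → Bool) :=
  Measure.pi fun _ => bern p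

/-- `n` belongs to the sumset `A + A`, where `A ⊆ {0,…,N}` is encoded by `ω`. -/
def inSumset {N : ℕ} (ω : Fin (N + 1) → Bool) (n : ℕ) : Prop :=
  ∃ a b : Fin (N + 1), ω a = true ∧ ω b = true ∧ (a : ℕ) + (b : ℕ) = n

/-- `Y`: the number of integers in `{0,…,N}` missing from `A + A`. -/
noncomputable def Ycount (N : ℕ) (ω : Fin (N + 1) → Bool) : ℕ :=
  {n : ℕ | n ≤ N ∧ ¬ inSumset ω n}.ncard

/-- `Z`: the number of integers in `{N+1,…,2N}` missing from `A + A`. -/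
noncomputable def Zcount (N : ℕ) (ω : Fin (N + 1) → Bool) : ℕ :=
  {n : ℕ | N + 1 ≤ n ∧ n ≤ 2 * N ∧ ¬ inSumset ω n}.ncard

/-- `W`: the number of integers in `{0,…,2N}` missing from `A + A`. -/
noncomputable def Wcount (N : ℕ) (ω : Fin (N + 1) → Bool) : ℕ :=
  {n : ℕ | n ≤ 2 * N ∧ ¬ inSumset ω n}.ncard

/-- `Ỹ`: the number of integers in `{0,…,⌊N/2⌋}` missing from `A + A`. -/
noncomputable def Ytilde (N : ℕ) (ω : Fin (N + 1) → Bool) : ℕ :=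
  {n : ℕ | n ≤ N / 2 ∧ ¬ inSumset ω n}.ncard

/-- `Z̃`: the number of integers in `{⌊3N/2⌋+1,…,2N}` missing from `A + A`. -/
noncomputable def Ztilde (N : ℕ) (ω : Fin (N + 1) → Bool) : ℕ :=
  {n : ℕ | 3 * N / 2 + 1 ≤ n ∧ n ≤ 2 * N ∧ ¬ inSumset ω n}.ncard

/-- A string of `k` bits has no two consecutive ones. -/
def noTwoOnes {k : ℕ} (x : Fin k → Bool) : Prop :=
  ∀ i : ℕ, ∀ hi : i + 1 < k, ¬(x ⟨i, Nat.lt_of_succ_lt hi⟩ = true ∧ x ⟨i + 1, hi⟩ = true)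

/-- `a_k`: the probability that `k` i.i.d. Bernoulli(p) bits contain no two
consecutive 1's (with `a_0 = 1`). -/
noncomputable def aseq (p : ℝ) (k : ℕ) : ℝ :=
  ((Measure.pi fun _ : Fin k => bern p) {x | noTwoOnes x}).toReal

/-!
If `Y ≠ Ỹ` then some `n ∈ (N/2, N]` is missing from `A + A`, and if `Z ≠ Z̃` then some
`n ∈ [N+1, 3N/2]` is. The pairs `{a, n - a}` inside `{0, …, N}` contain about `min(n, 2N - n) / 2`
disjoint ones, and `n ∉ A + A` forces `A` to miss an element of each of them; by independence this
has probability at most `(1 - p²)^{#pairs} ≤ s^{min(n, 2N-n)}` with `s = √(1 - p²)`. On both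
ranges `n ↦ min(n, 2N - n)` is injective with values `≥ N/2`, so a union bound and a geometric
series give `s^{N/2} / (1 - s)`, and `1 - s ≥ (1 - s²)/2 = p²/2`.
-/

lemma isProbabilityMeasure_bern {p : ℝ} (hp0 : 0 ≤ p) (hp1 : p ≤ 1) :
    IsProbabilityMeasure (bern p) :=
  ⟨by simp [bern, ← ENNReal.ofReal_add hp0 (sub_nonneg.2 hp1)]⟩

lemma isProbabilityMeasure_prodBern {p : ℝ} (hp0 : 0 ≤ p) (hp1 : p ≤ 1) (N : ℕ) :
    IsProbabilityMeasure (prodBern p N) := by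
  have := isProbabilityMeasure_bern hp0 hp1
  unfold prodBern
  infer_instance

lemma pi_bern_not_both_true {p : ℝ} (hp0 : 0 ≤ p) (hp1 : p ≤ 1) :
    (Measure.pi fun _ : Bool => bern p) {g | ¬(g true = true ∧ g false = true)} =
      ENNReal.ofReal (1 - p ^ 2) := by
  have := isProbabilityMeasure_bern hp0 hp1
  have hset : {g : Bool → Bool | ¬(g true = true ∧ g false = true)} =
      (Set.univ.pi fun _ => {true})ᶜ := by
    ext g; simp [and_comm]
  rw [hset, prob_compl_eq_one_sub (.univ_pi fun _ => measurableSet_singleton true),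
    Measure.pi_pi, Fintype.prod_bool]
  simp [bern, ← ENNReal.ofReal_mul hp0, ← ENNReal.ofReal_one,
    ← ENNReal.ofReal_sub _ (by positivity : 0 ≤ p * p), sq]

theorem MeasureTheory.Measure.pi_map_comp_of_injective {ι κ α : Type*} [Fintype ι] [Fintype κ]
    [MeasurableSpace α] (μ : Measure α) [IsProbabilityMeasure μ] {e : κ → ι}
    (he : Function.Injective e) :
    (Measure.pi fun _ : ι => μ).map (fun ω => ω ∘ e) = Measure.pi fun _ : κ => μ := by
  simpa only [Measure.infinitePi_eq_pi, Function.comp_def] using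
    Measure.map_infinitePi_infinitePi_of_inj (P := fun _ : ι => μ) he

theorem MeasureTheory.Measure.pi_forall_blocks_mem {ι κ β α : Type*} [Fintype ι] [Fintype κ]
    [Fintype β] [MeasurableSpace α] (μ : Measure α) [IsProbabilityMeasure μ] {e : κ × β → ι}
    (he : Function.Injective e) {S : Set (β → α)} (hS : MeasurableSet S) :
    (Measure.pi fun _ : ι => μ) {ω | ∀ j, (fun b => ω (e (j, b))) ∈ S} =
      (Measure.pi fun _ : β => μ) S ^ Fintype.card κ := by
  have hmap : (Measure.pi fun _ : ι => μ).map (fun ω j b => ω (e (j, b))) =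
      Measure.pi fun _ : κ => Measure.pi fun _ : β => μ := by
    have := Measure.infinitePi_map_curry (fun (_ : κ) (_ : β) => μ)
    simp only [Measure.infinitePi_eq_pi] at this
    rw [← this, ← Measure.pi_map_comp_of_injective μ he,
      Measure.map_map (by fun_prop) (by fun_prop)]
    rfl
  rw [show {ω : ι → α | ∀ j, (fun b => ω (e (j, b))) ∈ S} =
      (fun ω j b => ω (e (j, b))) ⁻¹' Set.univ.pi fun _ => S by ext; simp,
    ← Measure.map_apply (by fun_prop) (.univ_pi fun _ => hS), hmap, Measure.pi_pi,
    Finset.prod_const, Finset.card_univ]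

-- The `(n + 1) / 2 - (n - N)` pairs `{a, n - a}` with `n - N ≤ a < n - a` (truncated subtraction):
-- they are pairwise disjoint subsets of `{0, …, N}`, and `(j, true)` is the smaller element.
def sumPairs (N n : ℕ) : Fin ((n + 1) / 2 - (n - N)) × Bool → Fin (N + 1) :=
  fun jb => if jb.2 then ⟨n - N + jb.1, by omega⟩ else ⟨n - (n - N) - jb.1, by omega⟩

lemma sumPairs_injective (N n : ℕ) : Function.Injective (sumPairs N n) := by
  rintro ⟨j, _ | _⟩ ⟨k, _ | _⟩ h <;>
    simp only [sumPairs, Bool.false_eq_true, Bool.true_eq_false, ↓reduceIte, Fin.ext_iff,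
      Prod.mk.injEq, and_true, and_false] at h ⊢ <;>
    omega

lemma sumPairs_add (N n : ℕ) (j : Fin ((n + 1) / 2 - (n - N))) :
    (sumPairs N n (j, true) : ℕ) + sumPairs N n (j, false) = n := by
  simp only [sumPairs, if_true, Bool.false_eq_true, if_false]
  omega

lemma prodBern_not_inSumset_le {p : ℝ} (hp0 : 0 ≤ p) (hp1 : p ≤ 1) (N n : ℕ) :
    prodBern p N {ω | ¬ inSumset ω n} ≤ ENNReal.ofReal (1 - p ^ 2) ^ ((n + 1) / 2 - (n - N)) := by
  have := isProbabilityMeasure_bern hp0 hp1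
  have hsub : {ω | ¬ inSumset ω n} ⊆
      {ω | ∀ j, (fun b => ω (sumPairs N n (j, b))) ∈ {g | ¬(g true = true ∧ g false = true)}} :=
    fun ω hω j hj => hω ⟨_, _, hj.1, hj.2, sumPairs_add N n j⟩
  calc prodBern p N {ω | ¬ inSumset ω n}
      ≤ _ := measure_mono hsub
    _ = _ := Measure.pi_forall_blocks_mem _ (sumPairs_injective N n) (Set.toFinite _).measurableSet
    _ = _ := by rw [pi_bern_not_both_true hp0 hp1, Fintype.card_fin]

lemma sum_pow_le_pow_div_one_sub_of_injOn {s : ℝ} (hs0 : 0 ≤ s) (hs1 : s < 1) {S : Finset ℕ}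
    {g : ℕ → ℕ} (hg : Set.InjOn g S) {K : ℕ} (hK : ∀ n ∈ S, K ≤ g n) :
    ∑ n ∈ S, s ^ g n ≤ s ^ K / (1 - s) :=
  calc ∑ n ∈ S, s ^ g n = ∑ k ∈ S.image g, s ^ k := (Finset.sum_image hg).symm
    _ ≤ ∑ k ∈ Finset.Ico K (S.sup g + 1), s ^ k := by
        refine Finset.sum_le_sum_of_subset_of_nonneg ?_ fun k _ _ => pow_nonneg hs0 k
        intro k hk
        obtain ⟨n, hn, rfl⟩ := Finset.mem_image.1 hk
        exact Finset.mem_Ico.2 ⟨hK n hn, Nat.lt_succ_of_le (Finset.le_sup hn)⟩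
    _ ≤ s ^ K / (1 - s) := geom_sum_Ico_le_of_lt_one hs0 hs1

lemma sqrt_one_sub_sq_pow_div_le {p : ℝ} (hp0 : 0 < p) (hp1 : p < 1) {N K : ℕ} (hK : N ≤ 2 * K) :
    √(1 - p ^ 2) ^ K / (1 - √(1 - p ^ 2)) ≤ 2 / p ^ 2 * (1 - p ^ 2) ^ ((N : ℝ) / 4) := by
  set q := 1 - p ^ 2
  have hq0 : 0 < q := by nlinarith
  have hq1 : q < 1 := by nlinarith
  have hpow : √q ^ K ≤ q ^ ((N : ℝ) / 4) := by
    have : (N : ℝ) ≤ 2 * K := by exact_mod_cast hK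
    rw [Real.sqrt_eq_rpow, ← Real.rpow_mul_natCast hq0.le]
    exact Real.rpow_le_rpow_of_exponent_ge hq0 hq1.le (by linarith)
  -- `1 - q = (1 - √q)(1 + √q) ≤ 2 (1 - √q)`
  have hgap : p ^ 2 / 2 ≤ 1 - √q := by
    nlinarith [Real.sq_sqrt hq0.le, Real.sqrt_nonneg q]
  calc √q ^ K / (1 - √q) ≤ q ^ ((N : ℝ) / 4) / (p ^ 2 / 2) :=
        div_le_div₀ (by positivity) hpow (by positivity) hgap
    _ = 2 / p ^ 2 * q ^ ((N : ℝ) / 4) := by field_simp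

lemma prodBern_not_inSumset_toReal_le {p : ℝ} (hp0 : 0 ≤ p) (hp1 : p ≤ 1) (N n : ℕ) :
    (prodBern p N {ω | ¬ inSumset ω n}).toReal ≤ √(1 - p ^ 2) ^ min n (2 * N - n) := by
  have hq : 0 ≤ 1 - p ^ 2 := by nlinarith
  refine ENNReal.toReal_le_of_le_ofReal (by positivity) ?_
  refine (prodBern_not_inSumset_le hp0 hp1 N n).trans ?_
  rw [← ENNReal.ofReal_pow hq, ← Real.sq_sqrt hq, ← pow_mul, Real.sq_sqrt hq]
  exact ENNReal.ofReal_le_ofReal (pow_le_pow_of_le_one (Real.sqrt_nonneg _)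
    (Real.sqrt_le_one.2 (by nlinarith)) (by omega))

lemma prodBern_exists_not_inSumset_toReal_le {p : ℝ} (hp0 : 0 < p) (hp1 : p < 1) {N : ℕ}
    {S : Finset ℕ} (hinj : Set.InjOn (fun n => min n (2 * N - n)) S)
    (hS : ∀ n ∈ S, N ≤ 2 * min n (2 * N - n)) :
    (prodBern p N {ω | ∃ n ∈ S, ¬ inSumset ω n}).toReal ≤
      2 / p ^ 2 * (1 - p ^ 2) ^ ((N : ℝ) / 4) := by
  have hs1 : √(1 - p ^ 2) < 1 := by rw [Real.sqrt_lt' one_pos]; nlinarith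
  have hunion : {ω : Fin (N + 1) → Bool | ∃ n ∈ S, ¬ inSumset ω n} =
      ⋃ n ∈ S, {ω | ¬ inSumset ω n} := by
    ext; simp
  calc (prodBern p N {ω | ∃ n ∈ S, ¬ inSumset ω n}).toReal
      = (prodBern p N).real (⋃ n ∈ S, {ω | ¬ inSumset ω n}) := by rw [hunion, measureReal_def]
    _ ≤ ∑ n ∈ S, (prodBern p N).real {ω | ¬ inSumset ω n} := measureReal_biUnion_finset_le _ _
    _ ≤ ∑ n ∈ S, √(1 - p ^ 2) ^ min n (2 * N - n) :=
        Finset.sum_le_sum fun n _ => prodBern_not_inSumset_toReal_le hp0.le hp1.le N n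
    _ ≤ √(1 - p ^ 2) ^ ((N + 1) / 2) / (1 - √(1 - p ^ 2)) :=
        sum_pow_le_pow_div_one_sub_of_injOn (Real.sqrt_nonneg _) hs1 hinj
          fun n hn => by have := hS n hn; omega
    _ ≤ 2 / p ^ 2 * (1 - p ^ 2) ^ ((N : ℝ) / 4) := sqrt_one_sub_sq_pow_div_le hp0 hp1 (by omega)

lemma exists_not_inSumset_of_Ycount_ne {N : ℕ} {ω : Fin (N + 1) → Bool}
    (h : Ycount N ω ≠ Ytilde N ω) : ∃ n ∈ Finset.Ioc (N / 2) N, ¬ inSumset ω n := by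
  contrapose! h
  unfold Ycount Ytilde
  congr 1
  ext n
  have hn := h n
  simp only [Finset.mem_Ioc, Set.mem_ofPred_eq] at hn ⊢
  grind

lemma exists_not_inSumset_of_Zcount_ne {N : ℕ} {ω : Fin (N + 1) → Bool}
    (h : Zcount N ω ≠ Ztilde N ω) : ∃ n ∈ Finset.Icc (N + 1) (3 * N / 2), ¬ inSumset ω n := by
  contrapose! h
  unfold Zcount Ztilde
  congr 1
  ext n
  have hn := h n
  simp only [Finset.mem_Icc, Set.mem_ofPred_eq] at hn ⊢
  grind

/-- The probabilities of disagreement `P(Y ≠ Ỹ)` and `P(Z ≠ Z̃)` are bounded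
above by `(2/p²)(1-p²)^(N/4)`. -/
theorem stmt4 (p : ℝ) (hp0 : 0 < p) (hp1 : p < 1) (N : ℕ) :
    (prodBern p N {ω | Ycount N ω ≠ Ytilde N ω}).toReal ≤
        2 / p ^ 2 * (1 - p ^ 2) ^ ((N : ℝ) / 4) ∧
    (prodBern p N {ω | Zcount N ω ≠ Ztilde N ω}).toReal ≤
        2 / p ^ 2 * (1 - p ^ 2) ^ ((N : ℝ) / 4) := by
  have := isProbabilityMeasure_prodBern hp0.le hp1.le N
  constructor
  · refine (measureReal_mono fun ω => exists_not_inSumset_of_Ycount_ne).trans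
      (prodBern_exists_not_inSumset_toReal_le hp0 hp1 ?_ ?_)
    · intro a ha b hb hab
      simp only [Finset.coe_Ioc, Set.mem_Ioc] at ha hb hab
      omega
    · intro n hn
      simp only [Finset.mem_Ioc] at hn
      omega
  · refine (measureReal_mono fun ω => exists_not_inSumset_of_Zcount_ne).trans
      (prodBern_exists_not_inSumset_toReal_le hp0 hp1 ?_ ?_)
    · intro a ha b hb hab
      simp only [Finset.coe_Icc, Set.mem_Icc] at ha hb hab
      omega
    · intro n hn
      simp only [Finset.mem_Icc] at hn
      omega
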